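/- Let a, b, c, p, q, λ, λ', μ be real numbers with μ ≠ 0 and b·(λ')ⁿ ≠ 1, let n be a natural number, and define H : ℝ³ → ℝ³ by H(x, y, z) = (c·(μⁿ·z − p), b·(λ')ⁿ·y + q, a·λⁿ·x + p/μⁿ). Set yₙ = q/(1 − b·(λ')ⁿ) and zₙ = p/μⁿ. Then for every real s, H(H(0, yₙ, zₙ + s)) = (0, yₙ, zₙ + a·c·(λμ)ⁿ·s). In particular, the line {(0, yₙ, z) : z ∈ ℝ} is invariant under H², and on it H² acts as the linear map s ↦ a·c·(λμ)ⁿ·s in the coordinate s = z − zₙ. -/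

import Mathlib

/-! The point `(0, yₙ, zₙ)` is fixed by `H`: `yₙ` is the fixed point of the affine map
`y ↦ b λ'ⁿ y + q`, and `zₙ = p/μⁿ` makes the first coordinate vanish. Along the line
`{(0, yₙ, zₙ + s)}`, `H` moves the offset `s` into the first coordinate as `c μⁿ s`, and the next
application of `H` moves it back into the third coordinate as `a λⁿ c μⁿ s`. -/

theorem affine_apply_fixedPoint {β q : ℝ} (hβ : β ≠ 1) : β * (q / (1 - β)) + q = q / (1 - β) := by
  have : 1 - β ≠ 0 := sub_ne_zero.mpr hβ.symm
  field_simp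
  ring

noncomputable def tangencyReturnMap (a b c p q l l' μ : ℝ) (n : ℕ) (v : ℝ × ℝ × ℝ) :
    ℝ × ℝ × ℝ :=
  (c * (μ ^ n * v.2.2 - p), b * l' ^ n * v.2.1 + q, a * l ^ n * v.1 + p / μ ^ n)

section

variable (a b c p q l l' μ : ℝ) (n : ℕ)

theorem tangencyReturnMap_apply_line (hμ : μ ≠ 0) (hb : b * l' ^ n ≠ 1) (s : ℝ) :
    tangencyReturnMap a b c p q l l' μ n (0, q / (1 - b * l' ^ n), p / μ ^ n + s) =
      (c * μ ^ n * s, q / (1 - b * l' ^ n), p / μ ^ n) := by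
  simp only [tangencyReturnMap, affine_apply_fixedPoint hb, mul_add,
    mul_div_cancel₀ p (pow_ne_zero n hμ), mul_zero, zero_add, Prod.mk.injEq, and_true]
  ring

theorem tangencyReturnMap_apply_fixedLevel (hμ : μ ≠ 0) (hb : b * l' ^ n ≠ 1) (x : ℝ) :
    tangencyReturnMap a b c p q l l' μ n (x, q / (1 - b * l' ^ n), p / μ ^ n) =
      (0, q / (1 - b * l' ^ n), p / μ ^ n + a * l ^ n * x) := by
  simp only [tangencyReturnMap, affine_apply_fixedPoint hb, mul_div_cancel₀ p (pow_ne_zero n hμ),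
    sub_self, mul_zero, add_comm]

end

/-- For `H(x,y,z) = (c (μⁿ z - p), b l'ⁿ y + q, a lⁿ x + p/μⁿ)` with `μ ≠ 0` and
`b l'ⁿ ≠ 1`, setting `yₙ = q/(1 - b l'ⁿ)` and `zₙ = p/μⁿ`, one has, for every real `s`,
`H (H (0, yₙ, zₙ + s)) = (0, yₙ, zₙ + a c (l μ)ⁿ s)`: the line `{(0, yₙ, z)}` is
invariant under `H²`, which acts on it as `s ↦ a c (l μ)ⁿ s` in the coordinate
`s = z - zₙ`. -/
theorem stmt_15 (a b c p q l l' μ : ℝ) (n : ℕ) (hμ : μ ≠ 0)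
    (hb : b * l' ^ n ≠ 1)
    (H : ℝ × ℝ × ℝ → ℝ × ℝ × ℝ)
    (hH : H = fun v => (c * (μ ^ n * v.2.2 - p), b * l' ^ n * v.2.1 + q,
                        a * l ^ n * v.1 + p / μ ^ n))
    (yn zn : ℝ) (hyn : yn = q / (1 - b * l' ^ n)) (hzn : zn = p / μ ^ n) :
    ∀ s : ℝ, H (H (0, yn, zn + s)) = (0, yn, zn + a * c * (l * μ) ^ n * s) := by
  intro s
  have hH' : H = tangencyReturnMap a b c p q l l' μ n := hH
  subst hH' hyn hzn
  rw [tangencyReturnMap_apply_line a b c p q l l' μ n hμ hb,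
    tangencyReturnMap_apply_fixedLevel a b c p q l l' μ n hμ hb, mul_pow]
  ring_nf
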